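/- Let Φ(z, t) = (φ_t(z), τ(t)) be a fiberwise Hamiltonian deformation on U×G with primitive function p: U×G→ℝ satisfying D_z p_t(z) = a(φ_t(z))ᵀ D_zφ_t(z) − a(z)ᵀ, where Ω = Daᵀ − Da, and D_zφ_t(z) invertible. Define, for each parameter component t_i, 𝓜^i(φ_t(z), τ(t)) := a(φ_t(z))ᵀ ∂_{t_i}φ_t(z) − ∂_{t_i}p_t(z). Then D_z𝓜^i(φ_t(z), τ(t)) = −(∂_{t_i}φ_t(z))ᵀ Ω(φ_t(z)); equivalently, the generator 𝓕^i satisfies 𝓕^i = Ω^{−1}(D_z𝓜^i)ᵀ, i.e., the moment map 𝓜^i is a Hamiltonian for the parameter-variation vector field ∂_{t_i}φ_t. -/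

import Mathlib

/-!
Write `α = a · dz` and `X = ∂_tφ e`. Differentiating `𝓜(φ_t z) = α(φ_t z) X − ∂_t p e` in `z`
along `u` gives `Dα(D_zφ u) X + α(∂_z∂_tφ) − ∂_z∂_t p`. Differentiating the primitive identity
`D_z p u = α(φ) (D_zφ u) − α(z) u` in `t` instead gives `∂_t∂_z p = Dα(X) (D_zφ u) + α(∂_t∂_zφ)`.
Mixed partials of `φ` and `p` commute, so the second-order terms cancel and what is left is
`Dα(D_zφ u) X − Dα(X) (D_zφ u) = −Xᵀ Ω (D_zφ u)`. Finally `D_zφ` is onto, with right inverse `D_zψ`.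
-/

/-- Matrix of the exact 2-form `Ω(z) = Da(z)ᵀ − Da(z)`. -/
noncomputable def exactOmega {N : ℕ} (a : (Fin N → ℝ) → (Fin N → ℝ))
    (z : Fin N → ℝ) (p q : Fin N) : ℝ :=
  fderiv ℝ a z (Pi.single p 1) q - fderiv ℝ a z (Pi.single q 1) p

open Function

section PartialDerivatives

variable {E F G : Type*} [NormedAddCommGroup E] [NormedSpace ℝ E]
  [NormedAddCommGroup F] [NormedSpace ℝ F] [NormedAddCommGroup G] [NormedSpace ℝ G]
  {f : E → F → G} {t : E} {z : F}

theorem hasFDerivAt_partial_left (hf : DifferentiableAt ℝ (uncurry f) (t, z)) :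
    HasFDerivAt (fun t' => f t' z) ((fderiv ℝ (uncurry f) (t, z)).comp (.inl ℝ E F)) t :=
  hf.hasFDerivAt.comp (f := fun t' => (t', z)) t (hasFDerivAt_prodMk_left t z)

theorem hasFDerivAt_partial_right (hf : DifferentiableAt ℝ (uncurry f) (t, z)) :
    HasFDerivAt (f t) ((fderiv ℝ (uncurry f) (t, z)).comp (.inr ℝ E F)) z :=
  hf.hasFDerivAt.comp z (hasFDerivAt_prodMk_right (𝕜 := ℝ) t z)

theorem hasFDerivAt_fderiv_partial_left_apply (hf : ContDiff ℝ 2 (uncurry f)) (e : E) :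
    HasFDerivAt (fun z' => fderiv ℝ (fun t' => f t' z') t e)
      ((ContinuousLinearMap.apply ℝ G (e, 0)).comp
        ((fderiv ℝ (fderiv ℝ (uncurry f)) (t, z)).comp (.inr ℝ E F))) z := by
  have hf1 : Differentiable ℝ (uncurry f) := hf.differentiable two_ne_zero
  have hf2 : Differentiable ℝ (fderiv ℝ (uncurry f)) :=
    (hf.fderiv_right (m := 1) one_add_one_eq_two.le).differentiable one_ne_zero
  have hfun : (fun z' => fderiv ℝ (fun t' => f t' z') t e)
      = fun z' => fderiv ℝ (uncurry f) (t, z') (e, 0) := by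
    funext z'
    rw [(hasFDerivAt_partial_left (hf1 (t, z'))).fderiv]
    rfl
  rw [hfun]
  exact (ContinuousLinearMap.apply ℝ G (e, 0)).hasFDerivAt.comp z
    ((hf2 (t, z)).hasFDerivAt.comp z (hasFDerivAt_prodMk_right (𝕜 := ℝ) t z))

theorem hasFDerivAt_fderiv_partial_right_apply (hf : ContDiff ℝ 2 (uncurry f)) (u : F) :
    HasFDerivAt (fun t' => fderiv ℝ (f t') z u)
      ((ContinuousLinearMap.apply ℝ G (0, u)).comp
        ((fderiv ℝ (fderiv ℝ (uncurry f)) (t, z)).comp (.inl ℝ E F))) t := by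
  have hf1 : Differentiable ℝ (uncurry f) := hf.differentiable two_ne_zero
  have hf2 : Differentiable ℝ (fderiv ℝ (uncurry f)) :=
    (hf.fderiv_right (m := 1) one_add_one_eq_two.le).differentiable one_ne_zero
  have hfun : (fun t' => fderiv ℝ (f t') z u) = fun t' => fderiv ℝ (uncurry f) (t', z) (0, u) := by
    funext t'
    rw [(hasFDerivAt_partial_right (hf1 (t', z))).fderiv]
    rfl
  rw [hfun]
  exact (ContinuousLinearMap.apply ℝ G (0, u)).hasFDerivAt.comp t
    ((hf2 (t, z)).hasFDerivAt.comp t (hasFDerivAt_prodMk_left (𝕜 := ℝ) t z))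

theorem fderiv_fderiv_partial_comm (hf : ContDiff ℝ 2 (uncurry f)) (e : E) (u : F) :
    fderiv ℝ (fun z' => fderiv ℝ (fun t' => f t' z') t e) z u
      = fderiv ℝ (fun t' => fderiv ℝ (f t') z u) t e := by
  rw [(hasFDerivAt_fderiv_partial_left_apply hf e).fderiv,
    (hasFDerivAt_fderiv_partial_right_apply hf u).fderiv]
  exact (hf.contDiffAt.isSymmSndFDerivAt (by simp)).eq _ _

end PartialDerivatives

theorem fderiv_clm_apply_comp_apply {X F G H : Type*} [NormedAddCommGroup X] [NormedSpace ℝ X]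
    [NormedAddCommGroup F] [NormedSpace ℝ F] [NormedAddCommGroup G] [NormedSpace ℝ G]
    [NormedAddCommGroup H] [NormedSpace ℝ H]
    {α : F → G →L[ℝ] H} {g : X → F} {h : X → G} {x : X}
    (hα : DifferentiableAt ℝ α (g x)) (hg : DifferentiableAt ℝ g x) (hh : DifferentiableAt ℝ h x)
    (u : X) :
    fderiv ℝ (fun y => α (g y) (h y)) x u
      = fderiv ℝ α (g x) (fderiv ℝ g x u) (h x) + α (g x) (fderiv ℝ h x u) := by
  rw [fderiv_clm_apply (c := fun y => α (g y)) (hα.comp x hg) hh, fderiv_fun_comp x hα hg]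
  simp only [add_apply, ContinuousLinearMap.comp_apply, ContinuousLinearMap.flip_apply]
  exact add_comm _ _

theorem fderiv_apply_fderiv_of_rightInverse {F G : Type*}
    [NormedAddCommGroup F] [NormedSpace ℝ F] [NormedAddCommGroup G] [NormedSpace ℝ G]
    {f : F → G} {g : G → F} (hfg : RightInverse g f) {y : G}
    (hf : DifferentiableAt ℝ f (g y)) (hg : DifferentiableAt ℝ g y) (v : G) :
    fderiv ℝ f (g y) (fderiv ℝ g y v) = v := by
  rw [← ContinuousLinearMap.comp_apply, ← fderiv_comp y hf hg, hfg.comp_eq_id, fderiv_id]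
  rfl

section MomentMap

variable {E F : Type*} [NormedAddCommGroup E] [NormedSpace ℝ E]
  [NormedAddCommGroup F] [NormedSpace ℝ F]

noncomputable def momentMap (α : F → F →L[ℝ] ℝ) (φ : E → F → F) (p : E → F → ℝ) (e t : E)
    (z : F) : ℝ :=
  α (φ t z) (fderiv ℝ (fun t' => φ t' z) t e) - fderiv ℝ (fun t' => p t' z) t e

theorem fderiv_momentMap {α : F → F →L[ℝ] ℝ} {φ : E → F → F} {p : E → F → ℝ}
    (hα : Differentiable ℝ α) (hφ : ContDiff ℝ 2 (uncurry φ)) (hp : ContDiff ℝ 2 (uncurry p))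
    (hprim : ∀ t z u, fderiv ℝ (p t) z u = α (φ t z) (fderiv ℝ (φ t) z u) - α z u)
    (e t : E) (z u : F) :
    fderiv ℝ (momentMap α φ p e t) z u
      = fderiv ℝ α (φ t z) (fderiv ℝ (φ t) z u) (fderiv ℝ (fun t' => φ t' z) t e)
        - fderiv ℝ α (φ t z) (fderiv ℝ (fun t' => φ t' z) t e) (fderiv ℝ (φ t) z u) := by
  have hφ1 : Differentiable ℝ (uncurry φ) := hφ.differentiable two_ne_zero
  have hφt : ∀ t' z', DifferentiableAt ℝ (φ t') z' := fun t' z' =>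
    (hasFDerivAt_partial_right (hφ1 (t', z'))).differentiableAt
  have hφz : ∀ z', DifferentiableAt ℝ (fun t' => φ t' z') t := fun z' =>
    (hasFDerivAt_partial_left (hφ1 (t, z'))).differentiableAt
  have hpt : fderiv ℝ (fun z' => fderiv ℝ (fun t' => p t' z') t e) z u
      = fderiv ℝ α (φ t z) (fderiv ℝ (fun t' => φ t' z) t e) (fderiv ℝ (φ t) z u)
        + α (φ t z) (fderiv ℝ (fun t' => fderiv ℝ (φ t') z u) t e) := by
    rw [fderiv_fderiv_partial_comm hp, funext fun t' => hprim t' z u, fderiv_sub_const,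
      fderiv_clm_apply_comp_apply (hα _) (hφz z)
        (hasFDerivAt_fderiv_partial_right_apply hφ u).differentiableAt]
  have hφpt : fderiv ℝ (fun z' => α (φ t z') (fderiv ℝ (fun t' => φ t' z') t e)) z u
      = fderiv ℝ α (φ t z) (fderiv ℝ (φ t) z u) (fderiv ℝ (fun t' => φ t' z) t e)
        + α (φ t z) (fderiv ℝ (fun t' => fderiv ℝ (φ t') z u) t e) := by
    rw [fderiv_clm_apply_comp_apply (hα _) (hφt t z)
      (hasFDerivAt_fderiv_partial_left_apply hφ e).differentiableAt, fderiv_fderiv_partial_comm hφ]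
  have hX := (hasFDerivAt_fderiv_partial_left_apply hφ e (t := t) (z := z)).differentiableAt
  unfold momentMap
  rw [fderiv_fun_sub (f := fun z' => α (φ t z') (fderiv ℝ (fun t' => φ t' z') t e))
      (((hα _).comp z (hφt t z)).clm_apply hX)
      (hasFDerivAt_fderiv_partial_left_apply hp e).differentiableAt,
    sub_apply, hφpt, hpt]
  ring

end MomentMap

section Coordinates

variable {N : ℕ}

noncomputable def dotProductCLM (N : ℕ) : (Fin N → ℝ) →L[ℝ] (Fin N → ℝ) →L[ℝ] ℝ :=
  ∑ q, (ContinuousLinearMap.mul ℝ ℝ).bilinearComp (.proj q) (.proj q)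

@[simp]
theorem dotProductCLM_apply (c v : Fin N → ℝ) : dotProductCLM N c v = ∑ q, c q * v q := by
  simp [dotProductCLM]

theorem sum_sum_mul_exactOmega_mul (a : (Fin N → ℝ) → (Fin N → ℝ)) (w x y : Fin N → ℝ) :
    ∑ r, ∑ q, x r * exactOmega a w r q * y q
      = ∑ q, fderiv ℝ a w x q * y q - ∑ q, fderiv ℝ a w y q * x q := by
  have hexpand : ∀ v, fderiv ℝ a w v = ∑ r, v r • fderiv ℝ a w (Pi.single r 1) := fun v => by
    conv_lhs => rw [pi_eq_sum_univ' v]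
    simp only [map_sum, map_smul]
  rw [hexpand x, hexpand y]
  simp only [exactOmega, Finset.sum_apply, Pi.smul_apply, smul_eq_mul, Finset.sum_mul, mul_sub,
    sub_mul, Finset.sum_sub_distrib]
  rw [Finset.sum_comm (f := fun r q => x r * _ * y q)]
  congr 1
  exact Finset.sum_congr rfl fun _ _ => Finset.sum_congr rfl fun _ _ => by ring

theorem fderiv_dotProductCLM_comp_apply {a : (Fin N → ℝ) → (Fin N → ℝ)} {w : Fin N → ℝ}
    (ha : DifferentiableAt ℝ a w) (x y : Fin N → ℝ) :
    fderiv ℝ (fun w' => dotProductCLM N (a w')) w x y = ∑ q, fderiv ℝ a w x q * y q := by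
  rw [fderiv_fun_comp w (dotProductCLM N).differentiableAt ha, ContinuousLinearMap.fderiv]
  simp

end Coordinates

/-- the moment map of a fiberwise Hamiltonian deformation is a
Hamiltonian for the parameter-variation vector field:
`D_z𝓜^i(φ_t(z),τ(t)) = −(∂_{t_i}φ_t(z))ᵀ Ω(φ_t(z))`. -/
theorem moment_map_generates_deformation
    (N m : ℕ)
    (a : (Fin N → ℝ) → (Fin N → ℝ)) (ha : ContDiff ℝ 1 a)
    (φ : (Fin m → ℝ) → (Fin N → ℝ) → (Fin N → ℝ))
    (hφ : ContDiff ℝ 2 (fun q : (Fin m → ℝ) × (Fin N → ℝ) => φ q.1 q.2))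
    (τ : (Fin m → ℝ) → (Fin m → ℝ))
    (ψ : (Fin m → ℝ) → (Fin N → ℝ) → (Fin N → ℝ))
    (hψ : ContDiff ℝ 1 (fun q : (Fin m → ℝ) × (Fin N → ℝ) => ψ q.1 q.2))
    (hψφ : ∀ (t : Fin m → ℝ) (z : Fin N → ℝ), ψ t (φ t z) = z)
    (hφψ : ∀ (t : Fin m → ℝ) (w : Fin N → ℝ), φ t (ψ t w) = w)
    (p : (Fin m → ℝ) → (Fin N → ℝ) → ℝ)
    (hp : ContDiff ℝ 2 (fun q : (Fin m → ℝ) × (Fin N → ℝ) => p q.1 q.2))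
    (hprim : ∀ (t : Fin m → ℝ) (z : Fin N → ℝ) (v : Fin N → ℝ),
      fderiv ℝ (p t) z v
        = (∑ q, a (φ t z) q * (fderiv ℝ (φ t) z v) q) - ∑ q, a z q * v q)
    (M : Fin m → (Fin N → ℝ) → (Fin m → ℝ) → ℝ)
    (hMdiff : ∀ (i : Fin m) (s : Fin m → ℝ),
      Differentiable ℝ (fun w => M i w s))
    (hM : ∀ (i : Fin m) (t : Fin m → ℝ) (z : Fin N → ℝ),
      M i (φ t z) (τ t)
        = (∑ q, a (φ t z) q *
            (fderiv ℝ (fun t' => φ t' z) t (Pi.single i 1)) q)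
          - fderiv ℝ (fun t' => p t' z) t (Pi.single i 1)) :
    ∀ (i : Fin m) (t : Fin m → ℝ) (z : Fin N → ℝ) (v : Fin N → ℝ),
      fderiv ℝ (fun w => M i w (τ t)) (φ t z) v
        = -∑ r, ∑ q, (fderiv ℝ (fun t' => φ t' z) t (Pi.single i 1)) r *
            exactOmega a (φ t z) r q * v q := by
  intro i t z v
  have ha' : Differentiable ℝ a := ha.differentiable one_ne_zero
  have hφ' : Differentiable ℝ (uncurry φ) := hφ.differentiable two_ne_zero
  have hψ' : Differentiable ℝ (uncurry ψ) := hψ.differentiable one_ne_zero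
  have hα : Differentiable ℝ (fun w => dotProductCLM N (a w)) :=
    (dotProductCLM N).differentiable.comp ha'
  obtain ⟨u, rfl⟩ : ∃ u, fderiv ℝ (φ t) z u = v := by
    have hinv := fderiv_apply_fderiv_of_rightInverse (hφψ t) (y := φ t z)
      (by rw [hψφ]; exact (hasFDerivAt_partial_right (hφ' _)).differentiableAt)
      (hasFDerivAt_partial_right (hψ' _)).differentiableAt v
    rw [hψφ] at hinv
    exact ⟨_, hinv⟩
  have hmoment : (fun z' => M i (φ t z') (τ t))
      = momentMap (fun w => dotProductCLM N (a w)) φ p (Pi.single i 1) t :=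
    funext fun z' => by simp [momentMap, hM]
  rw [← ContinuousLinearMap.comp_apply,
    ← fderiv_fun_comp z (hMdiff i (τ t) _) (hasFDerivAt_partial_right (hφ' _)).differentiableAt,
    hmoment, fderiv_momentMap hα hφ hp (by simpa using hprim),
    fderiv_dotProductCLM_comp_apply (ha' _), fderiv_dotProductCLM_comp_apply (ha' _),
    sum_sum_mul_exactOmega_mul]
  ring
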